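/- arXiv:2403.06817 — 4 statements merged into one kernel-verified Lean document; each statement's English description precedes it below -/
import Mathlib

section
/- If p(X,Y) is a non-constant nice polynomial with leading coefficient a ≠ 0, then there exists n₀ ∈ ℕ such that for all n ≥ n₀ and m ∈ {n-1, n+1}: |p(m,n)| ≥ (|a|/2)·n. -/
/-- A two-variable real polynomial function is *nice* if it has the form
`p(X,Y) = Σ_{i=0}^{k} a_i · X^⌊i/2⌋ · Y^⌈i/2⌉`. -/
def IsNice (p : ℝ → ℝ → ℝ) : Prop :=
  ∃ (k : ℕ) (a : ℕ → ℝ), ∀ x y : ℝ,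
    p x y = ∑ i ∈ Finset.range (k + 1), a i * x ^ (i / 2) * y ^ ((i + 1) / 2)

/-- `p` is *co-nice* if swapping the variables yields a nice polynomial. -/
def IsCoNice (p : ℝ → ℝ → ℝ) : Prop := IsNice (fun x y => p y x)

/-- `f : ℕ² → ℝ` is *fast-converging* to `p` if for every real `r` there is `n₀`
such that for all `n ≥ n₀` and `m ∈ {n-1, n+1}`, `|f(m,n) - p(m,n)| ≤ 1/n^r`. -/
def FastConv (f : ℕ → ℕ → ℝ) (p : ℝ → ℝ → ℝ) : Prop :=
  ∀ r : ℝ, ∃ n₀ : ℕ, ∀ n : ℕ, n₀ ≤ n →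
    |f (n - 1) n - p ((n : ℝ) - 1) (n : ℝ)| ≤ 1 / (n : ℝ) ^ r ∧
    |f (n + 1) n - p ((n : ℝ) + 1) (n : ℝ)| ≤ 1 / (n : ℝ) ^ r

/-- A non-constant nice polynomial with nonzero leading coefficient `a k`
eventually satisfies `|p(m,n)| ≥ (|a k|/2)·n` for `m ∈ {n-1, n+1}`. -/
theorem stmt_4 (k : ℕ) (a : ℕ → ℝ) (hk : 1 ≤ k) (ha : a k ≠ 0)
    (p : ℝ → ℝ → ℝ)
    (hp : ∀ x y : ℝ, p x y = ∑ i ∈ Finset.range (k + 1),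
      a i * x ^ (i / 2) * y ^ ((i + 1) / 2)) :
    ∃ n₀ : ℕ, ∀ n : ℕ, n₀ ≤ n →
      (|a k| / 2) * (n : ℝ) ≤ |p ((n : ℝ) - 1) (n : ℝ)| ∧
      (|a k| / 2) * (n : ℝ) ≤ |p ((n : ℝ) + 1) (n : ℝ)| := by
  have hak : (0:ℝ) < |a k| := abs_pos.mpr ha
  set S : ℝ := ∑ i ∈ Finset.range k, |a i| with hS
  have hS0 : 0 ≤ S := Finset.sum_nonneg fun i _ => abs_nonneg _
  set C : ℝ := |a k| * k + 2 ^ k * S with hC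
  have hC0 : 0 ≤ C := by positivity
  -- key estimate for real n ≥ 1 and m between n-1 and 2n
  have key : ∀ n : ℝ, 1 ≤ n → C ≤ (|a k| / 2) * n → ∀ m : ℝ, n - 1 ≤ m → m ≤ 2 * n →
      (|a k| / 2) * n ≤ |p m n| := by
    intro n hn hCn m hm1 hm2
    have hn0 : (0:ℝ) < n := lt_of_lt_of_le one_pos hn
    have hne : n ≠ 0 := hn0.ne'
    have hm0 : (0:ℝ) ≤ m := le_trans (by linarith) hm1
    have hnk : n ^ k = n ^ (k - 1) * n := by
      rw [← pow_succ]; congr 1; omega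
    -- tail bound
    have tail : |∑ i ∈ Finset.range k, a i * m ^ (i / 2) * n ^ ((i + 1) / 2)|
        ≤ 2 ^ k * S * n ^ (k - 1) := by
      calc |∑ i ∈ Finset.range k, a i * m ^ (i / 2) * n ^ ((i + 1) / 2)|
          ≤ ∑ i ∈ Finset.range k, |a i * m ^ (i / 2) * n ^ ((i + 1) / 2)| :=
            Finset.abs_sum_le_sum_abs _ _
        _ ≤ ∑ i ∈ Finset.range k, |a i| * (2 ^ k * n ^ (k - 1)) := by
            apply Finset.sum_le_sum
            intro i hi
            have hik : i < k := Finset.mem_range.mp hi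
            rw [abs_mul, abs_mul, abs_pow, abs_pow, abs_of_nonneg hm0,
              abs_of_nonneg hn0.le]
            have h3 : (2:ℝ) ^ (i / 2) ≤ 2 ^ k :=
              pow_le_pow_right₀ one_le_two (le_trans (Nat.div_le_self _ _) hik.le)
            have h4 : n ^ (i / 2) * n ^ ((i + 1) / 2) = n ^ i := by
              rw [← pow_add]; congr 1; omega
            have h5 : n ^ i ≤ n ^ (k - 1) := pow_le_pow_right₀ hn (by omega)
            calc |a i| * m ^ (i / 2) * n ^ ((i + 1) / 2)
                ≤ |a i| * (2 * n) ^ (i / 2) * n ^ ((i + 1) / 2) := by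
                  gcongr
              _ = |a i| * 2 ^ (i / 2) * (n ^ (i / 2) * n ^ ((i + 1) / 2)) := by
                  rw [mul_pow]; ring
              _ = |a i| * 2 ^ (i / 2) * n ^ i := by rw [h4]
              _ ≤ |a i| * 2 ^ k * n ^ (k - 1) := by gcongr
              _ = |a i| * (2 ^ k * n ^ (k - 1)) := by ring
        _ = (∑ i ∈ Finset.range k, |a i|) * (2 ^ k * n ^ (k - 1)) := by
            rw [← Finset.sum_mul]
        _ = 2 ^ k * S * n ^ (k - 1) := by rw [← hS]; ring
    -- leading term lower bound
    have lead : (1 - k / n) * n ^ k ≤ m ^ (k / 2) * n ^ ((k + 1) / 2) := by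
      have hnm1 : (0:ℝ) ≤ n - 1 := by linarith
      have h1n : (1:ℝ)/n ≤ 1 := by rw [div_le_one hn0]; exact hn
      have bern : 1 + (k / 2 : ℕ) * (-(1 / n)) ≤ (1 + -(1 / n)) ^ (k / 2 : ℕ) :=
        one_add_mul_le_pow (by linarith) _
      have hj : ((k / 2 : ℕ) : ℝ) ≤ (k : ℝ) := by
        exact_mod_cast Nat.div_le_self k 2
      have hsplit : n - 1 = n * (1 + -(1 / n)) := by field_simp; ring
      have step0 : n ^ (k / 2) * (1 - k / n) ≤ (n - 1) ^ (k / 2) := by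
        rw [hsplit, mul_pow]
        have h6 : 1 - (k:ℝ) / n ≤ (1 + -(1 / n)) ^ (k / 2 : ℕ) := by
          refine le_trans ?_ bern
          have : ((k / 2 : ℕ) : ℝ) / n ≤ (k : ℝ) / n := by gcongr
          have h7 : ((k / 2 : ℕ) : ℝ) * (-(1/n)) = -(((k / 2 : ℕ) : ℝ) / n) := by
            ring
          rw [h7]; linarith
        calc n ^ (k / 2) * (1 - ↑k / n) ≤ n ^ (k / 2) * (1 + -(1 / n)) ^ (k / 2) := by
              apply mul_le_mul_of_nonneg_left h6 (by positivity)
          _ = n ^ (k / 2) * (1 + -(1 / n)) ^ (k / 2) := rfl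
      have step1 : (n - 1) ^ (k / 2) ≤ m ^ (k / 2) := pow_le_pow_left₀ hnm1 hm1 _
      have step2 : n ^ (k / 2) * (1 - k / n) ≤ m ^ (k / 2) := le_trans step0 step1
      have hkk : n ^ (k / 2) * n ^ ((k + 1) / 2) = n ^ k := by
        rw [← pow_add]; congr 1; omega
      calc (1 - ↑k / n) * n ^ k = n ^ (k / 2) * (1 - ↑k / n) * n ^ ((k + 1) / 2) := by
            rw [mul_comm (n ^ (k/2)) _, mul_assoc, hkk]
        _ ≤ m ^ (k / 2) * n ^ ((k + 1) / 2) := by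
            apply mul_le_mul_of_nonneg_right step2 (by positivity)
    have lead2 : |a k| * ((1 - k / n) * n ^ k) ≤ |a k * m ^ (k / 2) * n ^ ((k + 1) / 2)| := by
      rw [abs_mul, abs_mul, abs_pow, abs_pow, abs_of_nonneg hm0, abs_of_nonneg hn0.le,
        mul_assoc]
      exact mul_le_mul_of_nonneg_left lead hak.le
    -- assemble
    have hps : p m n = (∑ i ∈ Finset.range k, a i * m ^ (i / 2) * n ^ ((i + 1) / 2))
        + a k * m ^ (k / 2) * n ^ ((k + 1) / 2) := by
      rw [hp]; exact Finset.sum_range_succ _ _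
    set T : ℝ := ∑ i ∈ Finset.range k, a i * m ^ (i / 2) * n ^ ((i + 1) / 2) with hT
    set L : ℝ := a k * m ^ (k / 2) * n ^ ((k + 1) / 2) with hL
    have h6 : |L| ≤ |T + L| + |T| := by
      have h := abs_add_le (T + L) (-T)
      rw [abs_neg] at h
      simpa using h
    have e1 : |a k| * ((1 - ↑k / n) * n ^ k) = |a k| * n ^ k - |a k| * ↑k * n ^ (k - 1) := by
      rw [hnk]; field_simp
    have e2 : (|a k| / 2) * n * n ^ (k - 1) = (|a k| / 2) * n ^ k := by
      rw [hnk]; ring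
    have e3 : C * n ^ (k - 1) ≤ (|a k| / 2) * n ^ k := by
      rw [← e2]; exact mul_le_mul_of_nonneg_right hCn (by positivity)
    have e4 : n ≤ n ^ k := by
      calc n = n ^ 1 := (pow_one n).symm
        _ ≤ n ^ k := pow_le_pow_right₀ hn hk
    have e5 : C * n ^ (k - 1) = |a k| * ↑k * n ^ (k - 1) + 2 ^ k * S * n ^ (k - 1) := by
      rw [hC]; ring
    have e6 : (|a k| / 2) * n ≤ (|a k| / 2) * n ^ k :=
      mul_le_mul_of_nonneg_left e4 (by positivity)
    rw [hps]
    linarith [lead2, tail, h6, e1, e3, e5, e6]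
  -- choose n₀
  refine ⟨⌈2 * C / |a k|⌉₊ + 1, fun n hn => ?_⟩
  have hn1 : 1 ≤ n := le_trans (Nat.le_add_left 1 _) hn
  have hn1' : (1:ℝ) ≤ n := by exact_mod_cast hn1
  have hceil : 2 * C / |a k| ≤ (n : ℝ) := by
    calc 2 * C / |a k| ≤ (⌈2 * C / |a k|⌉₊ : ℝ) := Nat.le_ceil _
      _ ≤ (n : ℝ) := by exact_mod_cast le_trans (Nat.le_succ _) hn
  have hCn : C ≤ (|a k| / 2) * n := by
    rw [div_le_iff₀ hak] at hceil
    linarith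
  constructor
  · exact key n hn1' hCn _ le_rfl (by linarith)
  · exact key n hn1' hCn _ (by linarith) (by linarith)
end

section
/- Let FC denote the class of functions f : ℕ² → ℝ that are fast-converging to some nice polynomial, where f is fast-converging to p if for every real r there exists n₀ such that for n ≥ n₀ and m ∈ {n-1,n+1}, |f(m,n) - p(m,n)| ≤ 1/n^r. If f ∈ FC, then ReLU∘f (defined by (m,n) ↦ max(0, f(m,n))) is in FC. -/
lemma abs_max_zero_le (x : ℝ) : |max x 0| ≤ |x| := by
  rcases le_total x 0 with h | h
  · rw [max_eq_right h]; simp [abs_nonneg]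
  · rw [max_eq_left h]

lemma zero_is_nice : IsNice (fun _ _ => 0) := by
  refine ⟨0, fun _ => 0, fun x y => by simp⟩

/-- Positive case: if `p` is eventually `≥ c > 0` along the two diagonals,
then `max f 0` fast-converges to `p` itself. -/
lemma fastconv_pos (f : ℕ → ℕ → ℝ) (p : ℝ → ℝ → ℝ) (hconv : FastConv f p)
    (c : ℝ) (hc : 0 < c) (N : ℕ)
    (hN : ∀ n : ℕ, N ≤ n → c ≤ p ((n : ℝ) - 1) n ∧ c ≤ p ((n : ℝ) + 1) n) :
    FastConv (fun m n => max (f m n) 0) p := by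
  intro r
  obtain ⟨n₁, h₁⟩ := hconv r
  obtain ⟨n₂, h₂⟩ := hconv 1
  obtain ⟨M, hM⟩ := exists_nat_gt (1 / c)
  refine ⟨max (max n₁ n₂) (max N (M + 1)), fun n hn => ?_⟩
  have hn1 : n₁ ≤ n := le_trans (le_trans (le_max_left _ _) (le_max_left _ _)) hn
  have hn2 : n₂ ≤ n := le_trans (le_trans (le_max_right _ _) (le_max_left _ _)) hn
  have hnN : N ≤ n := le_trans (le_trans (le_max_left _ _) (le_max_right _ _)) hn
  have hnM : M + 1 ≤ n := le_trans (le_trans (le_max_right _ _) (le_max_right _ _)) hn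
  have hnpos : (0 : ℝ) < n := by
    have : 0 < n := by omega
    exact_mod_cast this
  have hMn : (1 / c : ℝ) < n := lt_of_lt_of_le hM (by exact_mod_cast Nat.le_of_succ_le hnM)
  have hinv : 1 / (n : ℝ) < c := by
    rw [div_lt_iff₀ hnpos]
    have := (div_lt_iff₀ hc).mp hMn
    linarith
  have hpow : (n : ℝ) ^ (1 : ℝ) = n := Real.rpow_one _
  have h2n := h₂ n hn2
  rw [hpow] at h2n
  have h1n := h₁ n hn1
  have hNn := hN n hnN
  constructor
  · have hf : 0 ≤ f (n - 1) n := by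
      have := (abs_le.mp h2n.1).1
      linarith [hNn.1]
    simpa [max_eq_left hf] using h1n.1
  · have hf : 0 ≤ f (n + 1) n := by
      have := (abs_le.mp h2n.2).1
      linarith [hNn.2]
    simpa [max_eq_left hf] using h1n.2

/-- Negative case: if `p` is eventually `≤ -c < 0` along the two diagonals,
then `max f 0` fast-converges to the zero polynomial. -/
lemma fastconv_neg (f : ℕ → ℕ → ℝ) (p : ℝ → ℝ → ℝ) (hconv : FastConv f p)
    (c : ℝ) (hc : 0 < c) (N : ℕ)
    (hN : ∀ n : ℕ, N ≤ n → p ((n : ℝ) - 1) n ≤ -c ∧ p ((n : ℝ) + 1) n ≤ -c) :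
    FastConv (fun m n => max (f m n) 0) (fun _ _ => 0) := by
  intro r
  obtain ⟨n₂, h₂⟩ := hconv 1
  obtain ⟨M, hM⟩ := exists_nat_gt (1 / c)
  refine ⟨max n₂ (max N (M + 1)), fun n hn => ?_⟩
  have hn2 : n₂ ≤ n := le_trans (le_max_left _ _) hn
  have hnN : N ≤ n := le_trans (le_trans (le_max_left _ _) (le_max_right _ _)) hn
  have hnM : M + 1 ≤ n := le_trans (le_trans (le_max_right _ _) (le_max_right _ _)) hn
  have hnpos : (0 : ℝ) < n := by
    have : 0 < n := by omega
    exact_mod_cast this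
  have hMn : (1 / c : ℝ) < n := lt_of_lt_of_le hM (by exact_mod_cast Nat.le_of_succ_le hnM)
  have hinv : 1 / (n : ℝ) < c := by
    rw [div_lt_iff₀ hnpos]
    have := (div_lt_iff₀ hc).mp hMn
    linarith
  have hpow : (n : ℝ) ^ (1 : ℝ) = n := Real.rpow_one _
  have h2n := h₂ n hn2
  rw [hpow] at h2n
  have hNn := hN n hnN
  have hrpos : 0 < (n : ℝ) ^ r := Real.rpow_pos_of_pos hnpos r
  have hle : (0 : ℝ) ≤ 1 / (n : ℝ) ^ r := le_of_lt (by positivity)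
  constructor
  · have hf : f (n - 1) n ≤ 0 := by
      have := (abs_le.mp h2n.1).2
      linarith [hNn.1]
    simpa [max_eq_right hf] using hle
  · have hf : f (n + 1) n ≤ 0 := by
      have := (abs_le.mp h2n.2).2
      linarith [hNn.2]
    simpa [max_eq_right hf] using hle

open Polynomial Filter in
/-- If `f` is fast-converging to some nice polynomial, then so is `ReLU ∘ f`. -/
theorem stmt_8 (f : ℕ → ℕ → ℝ) (p : ℝ → ℝ → ℝ)
    (hnice : IsNice p) (hconv : FastConv f p) :
    ∃ q : ℝ → ℝ → ℝ, IsNice q ∧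
      FastConv (fun m n => max (f m n) 0) q := by
  obtain ⟨k, a, hp⟩ := hnice
  classical
  set S : Finset ℕ := (Finset.range (k + 1)).filter (fun i => a i ≠ 0) with hS
  by_cases hSe : S = ∅
  · -- p is identically zero
    have hp0 : ∀ x y : ℝ, p x y = 0 := by
      intro x y
      rw [hp]
      refine Finset.sum_eq_zero fun i hi => ?_
      have : a i = 0 := by
        by_contra h
        have : i ∈ S := Finset.mem_filter.mpr ⟨hi, h⟩
        simp [hSe] at this
      simp [this]
    refine ⟨p, ⟨k, a, hp⟩, ?_⟩
    intro r
    obtain ⟨n₀, h₀⟩ := hconv r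
    refine ⟨n₀, fun n hn => ?_⟩
    have h := h₀ n hn
    constructor
    · calc |max (f (n - 1) n) 0 - p ((n : ℝ) - 1) n| = |max (f (n - 1) n) 0| := by
            rw [hp0]; ring_nf
        _ ≤ |f (n - 1) n| := abs_max_zero_le _
        _ = |f (n - 1) n - p ((n : ℝ) - 1) n| := by rw [hp0]; ring_nf
        _ ≤ _ := h.1
    · calc |max (f (n + 1) n) 0 - p ((n : ℝ) + 1) n| = |max (f (n + 1) n) 0| := by
            rw [hp0]; ring_nf
        _ ≤ |f (n + 1) n| := abs_max_zero_le _
        _ = |f (n + 1) n - p ((n : ℝ) + 1) n| := by rw [hp0]; ring_nf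
        _ ≤ _ := h.2
  · -- k' : top index with nonzero coefficient
    have hSne : S.Nonempty := Finset.nonempty_iff_ne_empty.mpr hSe
    set k' : ℕ := S.max' hSne with hk'
    have hk'S : k' ∈ S := S.max'_mem hSne
    have hak' : a k' ≠ 0 := (Finset.mem_filter.mp hk'S).2
    have hk'le : k' ∈ Finset.range (k + 1) := (Finset.mem_filter.mp hk'S).1
    have htop : ∀ i ∈ Finset.range (k + 1), k' < i → a i = 0 := by
      intro i hi hlt
      by_contra h
      have : i ∈ S := Finset.mem_filter.mpr ⟨hi, h⟩
      exact absurd (S.le_max' i this) (not_le.mpr hlt)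
    -- the two diagonal polynomials
    set P : ℝ → ℝ[X] := fun ε =>
      ∑ i ∈ Finset.range (k + 1), C (a i) * (X + C ε) ^ (i / 2) * X ^ ((i + 1) / 2) with hPdef
    have heval : ∀ ε x : ℝ, eval x (P ε) = p (x + ε) x := by
      intro ε x
      rw [hp, hPdef]
      simp [eval_finset_sum]
    -- each monomial is monic of degree i
    have hmon : ∀ (ε : ℝ) (i : ℕ),
        ((X + C ε) ^ (i / 2) * X ^ ((i + 1) / 2) : ℝ[X]).Monic ∧
        ((X + C ε) ^ (i / 2) * X ^ ((i + 1) / 2) : ℝ[X]).natDegree = i := by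
      intro ε i
      have h1 : ((X + C ε : ℝ[X])).Monic := monic_X_add_C ε
      have h2 : ((X + C ε : ℝ[X]) ^ (i / 2)).Monic := h1.pow _
      have h3 : ((X : ℝ[X]) ^ ((i + 1) / 2)).Monic := monic_X_pow _
      refine ⟨h2.mul h3, ?_⟩
      rw [h2.natDegree_mul h3]
      rw [natDegree_pow, natDegree_X_pow, natDegree_X_add_C]
      omega
    have hdegterm : ∀ (ε : ℝ) (i : ℕ),
        (C (a i) * ((X + C ε) ^ (i / 2) * X ^ ((i + 1) / 2)) : ℝ[X]).natDegree ≤ i := by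
      intro ε i
      calc (C (a i) * ((X + C ε) ^ (i / 2) * X ^ ((i + 1) / 2)) : ℝ[X]).natDegree
          ≤ (C (a i)).natDegree + ((X + C ε) ^ (i / 2) * X ^ ((i + 1) / 2) : ℝ[X]).natDegree :=
            natDegree_mul_le
        _ ≤ i := by rw [natDegree_C, (hmon ε i).2]; omega
    have hcoeff : ∀ ε : ℝ, (P ε).coeff k' = a k' := by
      intro ε
      rw [hPdef]
      rw [finset_sum_coeff]
      rw [Finset.sum_eq_single k']
      · have hm := hmon ε k'
        rw [mul_assoc, coeff_C_mul]
        have : ((X + C ε) ^ (k' / 2) * X ^ ((k' + 1) / 2) : ℝ[X]).coeff k' = 1 := by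
          have := hm.1.leadingCoeff
          rwa [leadingCoeff, hm.2] at this
        rw [this, mul_one]
      · intro i hi hne
        rcases lt_or_gt_of_ne hne with hlt | hgt
        · rw [mul_assoc]
          apply coeff_eq_zero_of_natDegree_lt
          exact lt_of_le_of_lt (hdegterm ε i) hlt
        · rw [htop i hi hgt]; simp
      · intro h
        exact absurd hk'le h
    have hdegP : ∀ ε : ℝ, (P ε).degree ≤ (k' : WithBot ℕ) := by
      intro ε
      rw [hPdef]
      refine le_trans (degree_sum_le _ _) ?_
      rw [Finset.sup_le_iff]
      intro i hi
      rcases le_or_gt i k' with hle | hgt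
      · rw [mul_assoc]
        refine le_trans degree_le_natDegree ?_
        exact_mod_cast le_trans (Nat.cast_le.mpr (hdegterm ε i)) (Nat.cast_le.mpr hle)
      · rw [htop i hi hgt]
        simp [degree_zero]
    have hPne : ∀ ε : ℝ, P ε ≠ 0 := by
      intro ε h
      apply hak'
      rw [← hcoeff ε, h, coeff_zero]
    have hnatdeg : ∀ ε : ℝ, (P ε).natDegree = k' := by
      intro ε
      have h1 : (P ε).natDegree ≤ k' := natDegree_le_iff_degree_le.mpr (hdegP ε)
      have h2 : k' ≤ (P ε).natDegree := le_natDegree_of_ne_zero (by rw [hcoeff ε]; exact hak')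
      omega
    have hlead : ∀ ε : ℝ, (P ε).leadingCoeff = a k' := by
      intro ε
      rw [leadingCoeff, hnatdeg ε, hcoeff ε]
    -- case on k' and sign of a k'
    rcases Nat.eq_zero_or_pos k' with hk0 | hk0
    · -- p is the constant a 0
      have hpc : ∀ x y : ℝ, p x y = a 0 := by
        intro x y
        rw [hp]
        rw [Finset.sum_eq_single 0]
        · simp
        · intro i hi hne
          rw [htop i hi (by omega)]
          ring
        · intro h
          simp at h
      rcases lt_trichotomy (a 0) 0 with hneg | hzero | hpos
      · refine ⟨fun _ _ => 0, zero_is_nice, ?_⟩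
        refine fastconv_neg f p hconv (-(a 0)) (by linarith) 0 fun n _ => ?_
        rw [hpc, hpc]
        constructor <;> linarith
      · exact absurd (hk0 ▸ hzero : a k' = 0) hak'
      · refine ⟨p, ⟨k, a, hp⟩, ?_⟩
        refine fastconv_pos f p hconv (a 0) hpos 0 fun n _ => ?_
        rw [hpc, hpc]
        exact ⟨le_refl _, le_refl _⟩
    · -- nonconstant: both diagonal polynomials tend to ±∞
      have hdegpos : ∀ ε : ℝ, 0 < (P ε).degree := by
        intro ε
        rw [degree_eq_natDegree (hPne ε), hnatdeg ε]
        exact_mod_cast hk0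
      rcases lt_or_gt_of_ne hak' with hneg | hpos
      · -- a k' < 0 : both tend to -∞
        have ht : ∀ ε : ℝ, Tendsto (fun x => eval x (P ε)) atTop atBot := fun ε =>
          tendsto_atBot_of_leadingCoeff_nonpos (P ε) (hdegpos ε) (by rw [hlead ε]; linarith)
        have h1 := (ht 1).eventually (eventually_le_atBot (-1 : ℝ))
        have h2 := (ht (-1)).eventually (eventually_le_atBot (-1 : ℝ))
        have hnat : ∀ᶠ n : ℕ in atTop,
            eval (n : ℝ) (P 1) ≤ -1 ∧ eval (n : ℝ) (P (-1)) ≤ -1 :=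
          tendsto_natCast_atTop_atTop.eventually (h1.and h2)
        obtain ⟨N, hN⟩ := hnat.exists_forall_of_atTop
        refine ⟨fun _ _ => 0, zero_is_nice, ?_⟩
        refine fastconv_neg f p hconv 1 one_pos N fun n hn => ?_
        have h := hN n hn
        rw [heval, heval] at h
        constructor
        · have := h.2
          rwa [show ((n : ℝ) + -1) = (n : ℝ) - 1 by ring] at this
        · exact h.1
      · -- a k' > 0 : both tend to +∞
        have ht : ∀ ε : ℝ, Tendsto (fun x => eval x (P ε)) atTop atTop := fun ε =>
          tendsto_atTop_of_leadingCoeff_nonneg (P ε) (hdegpos ε) (by rw [hlead ε]; linarith)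
        have h1 := (ht 1).eventually (eventually_ge_atTop (1 : ℝ))
        have h2 := (ht (-1)).eventually (eventually_ge_atTop (1 : ℝ))
        have hnat : ∀ᶠ n : ℕ in atTop,
            (1 : ℝ) ≤ eval (n : ℝ) (P 1) ∧ (1 : ℝ) ≤ eval (n : ℝ) (P (-1)) :=
          tendsto_natCast_atTop_atTop.eventually (h1.and h2)
        obtain ⟨N, hN⟩ := hnat.exists_forall_of_atTop
        refine ⟨p, ⟨k, a, hp⟩, ?_⟩
        refine fastconv_pos f p hconv 1 one_pos N fun n hn => ?_
        have h := hN n hn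
        rw [heval, heval] at h
        constructor
        · have := h.2
          rwa [show ((n : ℝ) + -1) = (n : ℝ) - 1 by ring] at this
        · exact h.1
end

section
/- Let σ(x) = 1/(1+e^{-x}) be the logistic function. If f : ℕ² → ℝ is fast-converging to a non-constant nice polynomial with positive leading coefficient, then σ∘f is fast-converging to the constant polynomial 1, i.e., for every real r there exists n₀ such that for all n ≥ n₀ and m ∈ {n-1,n+1}: |σ(f(m,n)) - 1| ≤ 1/n^r. -/
open Filter Real Topology

lemma abs_logistic_sub_one_le (x : ℝ) : |1 / (1 + exp (-x)) - 1| ≤ exp (-x) := by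
  have hsub : 1 / (1 + exp (-x)) - 1 = -(exp (-x) / (1 + exp (-x))) := by
    field_simp
    ring
  rw [hsub, abs_neg, abs_of_pos (by positivity), div_le_iff₀ (by positivity)]
  nlinarith [exp_pos (-x)]

lemma eventually_exp_neg_mul_le_inv_rpow {c : ℝ} (hc : 0 < c) (r : ℝ) :
    ∀ᶠ n : ℕ in atTop, exp (-(c * n)) ≤ 1 / (n : ℝ) ^ r := by
  have hlim : ∀ᶠ x : ℝ in atTop, x ^ r * exp (-c * x) < 1 :=
    (tendsto_rpow_mul_exp_neg_mul_atTop_nhds_zero r c hc).eventually (gt_mem_nhds one_pos)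
  filter_upwards [tendsto_natCast_atTop_atTop.eventually hlim, eventually_gt_atTop 0]
    with n hn hn0
  rw [le_div_iff₀ (by positivity), mul_comm, neg_mul_eq_neg_mul]
  exact hn.le

lemma fastConv_logistic_one_of_linear_le {f : ℕ → ℕ → ℝ} {c : ℝ} (hc : 0 < c)
    (hf : ∀ᶠ n : ℕ in atTop, c * n ≤ f (n - 1) n ∧ c * n ≤ f (n + 1) n) :
    FastConv (fun m n => 1 / (1 + exp (-(f m n)))) (fun _ _ => 1) := by
  intro r
  refine eventually_atTop.mp ?_
  filter_upwards [hf, eventually_exp_neg_mul_le_inv_rpow hc r] with n hfn hdecay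
  have hclose {x : ℝ} (hx : c * n ≤ x) : |1 / (1 + exp (-x)) - 1| ≤ 1 / (n : ℝ) ^ r :=
    (abs_logistic_sub_one_le x).trans ((exp_le_exp.mpr (neg_le_neg hx)).trans hdecay)
  exact ⟨hclose hfn.1, hclose hfn.2⟩

section NicePolynomial

variable {k : ℕ} {a : ℕ → ℝ} {p : ℝ → ℝ → ℝ}
  (hp : ∀ x y : ℝ, p x y = ∑ i ∈ Finset.range (k + 1), a i * x ^ (i / 2) * y ^ ((i + 1) / 2))
include hp

lemma tendsto_apply_add_self_div_pow (c : ℝ) :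
    Tendsto (fun x : ℝ => p (x + c) x / x ^ k) atTop (𝓝 (a k)) := by
  -- Since `⌊i/2⌋ + ⌈i/2⌉ = i`, the `i`-th term divided by `x^k` is `a i (1 + c/x)^⌊i/2⌋ x^{-(k-i)}`.
  have hinv : Tendsto (fun x : ℝ => x⁻¹) atTop (𝓝 0) := tendsto_inv_atTop_zero
  have hlim : Tendsto (fun x : ℝ => ∑ i ∈ Finset.range (k + 1),
      a i * (1 + c * x⁻¹) ^ (i / 2) * x⁻¹ ^ (k - i)) atTop
      (𝓝 (∑ i ∈ Finset.range (k + 1), a i * (1 + c * 0) ^ (i / 2) * (0 : ℝ) ^ (k - i))) :=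
    tendsto_finsetSum _ fun i _ => (tendsto_const_nhds.mul
      ((tendsto_const_nhds.add (tendsto_const_nhds.mul hinv)).pow _)).mul (hinv.pow _)
  have hval : ∑ i ∈ Finset.range (k + 1), a i * (1 + c * 0) ^ (i / 2) * (0 : ℝ) ^ (k - i)
      = a k := by
    rw [Finset.sum_eq_single_of_mem k (Finset.self_mem_range_succ k)]
    · simp
    · intro i hi hne
      rw [zero_pow (by simp at hi; omega), mul_zero]
  rw [hval] at hlim
  refine hlim.congr' ?_
  filter_upwards [eventually_gt_atTop 0] with x hx
  rw [hp, Finset.sum_div]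
  refine Finset.sum_congr rfl fun i hi => ?_
  have hik : i ≤ k := Nat.lt_succ_iff.mp (Finset.mem_range.mp hi)
  have hxk : x ^ k = x ^ (i / 2) * x ^ ((i + 1) / 2) * x ^ (k - i) := by
    rw [← pow_add, ← pow_add]; congr 1; omega
  rw [show 1 + c * x⁻¹ = (x + c) / x by field_simp, div_pow, inv_pow, hxk]
  field_simp

lemma eventually_mul_le_apply_add_self (hk : 1 ≤ k) (ha : 0 < a k) (c : ℝ) :
    ∀ᶠ x : ℝ in atTop, a k / 2 * x ≤ p (x + c) x := by
  filter_upwards [(tendsto_apply_add_self_div_pow hp c).eventually_const_lt (half_lt_self ha),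
    eventually_ge_atTop 1] with x hlt hx
  calc a k / 2 * x ≤ a k / 2 * x ^ k := by gcongr; exact le_self_pow₀ hx (by omega)
    _ ≤ p (x + c) x := ((lt_div_iff₀ (by positivity)).mp hlt).le

lemma FastConv.eventually_linear_le (hk : 1 ≤ k) (ha : 0 < a k) {f : ℕ → ℕ → ℝ}
    (hconv : FastConv f p) :
    ∀ᶠ n : ℕ in atTop, a k / 4 * n ≤ f (n - 1) n ∧ a k / 4 * n ≤ f (n + 1) n := by
  obtain ⟨n₀, hn₀⟩ := hconv 0
  have hp_le (c : ℝ) : ∀ᶠ n : ℕ in atTop, a k / 2 * n ≤ p (n + c) n :=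
    tendsto_natCast_atTop_atTop.eventually (eventually_mul_le_apply_add_self hp hk ha c)
  filter_upwards [eventually_ge_atTop n₀, hp_le (-1), hp_le 1,
    tendsto_natCast_atTop_atTop.eventually (eventually_ge_atTop (4 / a k))]
    with n hn hlow hhigh hlarge
  have hone : 1 ≤ a k / 4 * n := by rw [div_le_iff₀ ha] at hlarge; linarith
  rw [← sub_eq_add_neg] at hlow
  obtain ⟨hminus, hplus⟩ := hn₀ n hn
  simp only [rpow_zero, div_one] at hminus hplus
  constructor <;> linarith [(abs_le.mp hminus).1, (abs_le.mp hplus).1]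

end NicePolynomial

/-- If `f` is fast-converging to a non-constant nice polynomial with positive
leading coefficient, then `σ ∘ f` is fast-converging to the constant `1`,
where `σ` is the logistic function. -/
theorem stmt_9 (k : ℕ) (a : ℕ → ℝ) (hk : 1 ≤ k) (ha : 0 < a k)
    (p : ℝ → ℝ → ℝ)
    (hp : ∀ x y : ℝ, p x y = ∑ i ∈ Finset.range (k + 1),
      a i * x ^ (i / 2) * y ^ ((i + 1) / 2))
    (f : ℕ → ℕ → ℝ) (hconv : FastConv f p) :
    FastConv (fun m n => 1 / (1 + Real.exp (-(f m n)))) (fun _ _ => 1) :=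
  fastConv_logistic_one_of_linear_le (by positivity) (hconv.eventually_linear_le hp hk ha)
end

section
/- There is no function F : ℕ² → ℝ that is fast-converging to a nice polynomial and satisfies F(n-1, n) ≥ 1/4 and F(n+1, n) ≤ -1/4 for all n ≥ 1. -/
open Polynomial Filter in
/-- No function `F : ℕ → ℕ → ℝ` fast-converging to a nice polynomial can satisfy
`F(n-1,n) ≥ 1/4` and `F(n+1,n) ≤ -1/4` for all `n ≥ 1`. -/
theorem stmt_12 :
    ¬ ∃ (F : ℕ → ℕ → ℝ) (p : ℝ → ℝ → ℝ), IsNice p ∧ FastConv F p ∧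
      ∀ n : ℕ, 1 ≤ n → 1 / 4 ≤ F (n - 1) n ∧ F (n + 1) n ≤ -(1 / 4) := by
  rintro ⟨F, p, ⟨k, a, hp⟩, hfc, hF⟩
  obtain ⟨n₀, hn₀⟩ := hfc 1
  set M : ℕ := max n₀ 8 with hMdef
  -- eventual sign bounds on p along the two lines
  have hM1 : (1 : ℕ) ≤ M := le_trans (by norm_num) (le_max_right n₀ 8)
  have key : ∀ n : ℕ, M ≤ n →
      1/8 ≤ p ((n:ℝ) - 1) n ∧ p ((n:ℝ) + 1) n ≤ -(1/8) := by
    intro n hn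
    have hn8 : (8:ℕ) ≤ n := le_trans (le_max_right n₀ 8) hn
    have hn8' : (8:ℝ) ≤ (n:ℝ) := by exact_mod_cast hn8
    have hnpos : (0:ℝ) < n := by linarith
    have h1 := hn₀ n (le_trans (le_max_left n₀ 8) hn)
    rw [Real.rpow_one] at h1
    have hinv : 1/(n:ℝ) ≤ 1/8 := by
      apply div_le_div_of_nonneg_left (by norm_num) (by norm_num) hn8'
    obtain ⟨hF1, hF2⟩ := hF n (le_trans hM1 hn)
    obtain ⟨hA, hB⟩ := h1
    rw [abs_le] at hA hB
    constructor <;> [linarith [hA.2]; linarith [hB.1]]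
  -- polynomials
  set qi : ℕ → ℝ[X] := fun i => (X - C 1)^(i/2) * X^((i+1)/2) with hqi
  set si : ℕ → ℝ[X] := fun i => (X + C 1)^(i/2) * X^((i+1)/2) with hsi
  set Q : ℝ[X] := ∑ i ∈ Finset.range (k+1), C (a i) * qi i with hQ
  set S : ℝ[X] := ∑ i ∈ Finset.range (k+1), C (a i) * si i with hS
  have hQev : ∀ x : ℝ, Q.eval x = p (x - 1) x := by
    intro x
    rw [hp, hQ, eval_finset_sum]
    exact Finset.sum_congr rfl fun i _ => by simp [hqi, mul_assoc]
  have hSev : ∀ x : ℝ, S.eval x = p (x + 1) x := by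
    intro x
    rw [hp, hS, eval_finset_sum]
    exact Finset.sum_congr rfl fun i _ => by simp [hsi, mul_assoc]
  have hqim : ∀ i, (qi i).Monic := fun i => ((monic_X_sub_C 1).pow _).mul (monic_X_pow _)
  have hsim : ∀ i, (si i).Monic := fun i => ((monic_X_add_C 1).pow _).mul (monic_X_pow _)
  have hqind : ∀ i, (qi i).natDegree = i := by
    intro i
    have h1 : (qi i).natDegree = (i/2) * (X - C (1:ℝ)).natDegree + ((i+1)/2) := by
      simp only [hqi]
      rw [Polynomial.Monic.natDegree_mul ((monic_X_sub_C (1:ℝ)).pow _) (monic_X_pow _),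
        natDegree_pow, natDegree_X_pow]
    rw [h1, natDegree_X_sub_C]
    omega
  have hsind : ∀ i, (si i).natDegree = i := by
    intro i
    have h1 : (si i).natDegree = (i/2) * (X + C (1:ℝ)).natDegree + ((i+1)/2) := by
      simp only [hsi]
      rw [Polynomial.Monic.natDegree_mul ((monic_X_add_C (1:ℝ)).pow _) (monic_X_pow _),
        natDegree_pow, natDegree_X_pow]
    rw [h1, natDegree_X_add_C]
    omega
  have hqdeg : ∀ i, (qi i).degree = (i : WithBot ℕ) := fun i => by
    rw [degree_eq_natDegree (hqim i).ne_zero, hqind i]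
  have hsdeg : ∀ i, (si i).degree = (i : WithBot ℕ) := fun i => by
    rw [degree_eq_natDegree (hsim i).ne_zero, hsind i]
  have hdiff : ∀ i, (qi i - si i).degree < (i : WithBot ℕ) := by
    intro i
    have h := degree_sub_lt (p := qi i) (q := si i) (by rw [hqdeg i, hsdeg i]) (hqim i).ne_zero
      (by rw [(hqim i).leadingCoeff, (hsim i).leadingCoeff])
    rwa [hqdeg i] at h
  -- trivial case: all coefficients vanish
  by_cases hall : ∀ i ∈ Finset.range (k+1), a i = 0
  · have hz : p ((M:ℝ) - 1) M = 0 := by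
      rw [hp]
      exact Finset.sum_eq_zero fun i hi => by rw [hall i hi]; ring
    have := (key M le_rfl).1
    rw [hz] at this; norm_num at this
  push_neg at hall
  obtain ⟨j, hjmem, hja⟩ := hall
  set T : Finset ℕ := (Finset.range (k+1)).filter (fun i => a i ≠ 0) with hT
  have hTne : T.Nonempty := ⟨j, Finset.mem_filter.mpr ⟨hjmem, hja⟩⟩
  set N : ℕ := T.max' hTne with hN
  have hNmem := T.max'_mem hTne
  rw [Finset.mem_filter] at hNmem
  have haN : a N ≠ 0 := hNmem.2
  have hNle : ∀ i ∈ Finset.range (k+1), a i ≠ 0 → i ≤ N := fun i hi hai =>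
    T.le_max' i (Finset.mem_filter.mpr ⟨hi, hai⟩)
  -- Q.coeff N = a N
  have hQcoeff : Q.coeff N = a N := by
    rw [hQ, finset_sum_coeff, Finset.sum_eq_single N]
    · rw [coeff_C_mul]
      have : (qi N).coeff N = 1 := by
        have := (hqim N).coeff_natDegree
        rwa [hqind N] at this
      rw [this, mul_one]
    · intro i hi hne
      by_cases hai : a i = 0
      · simp [hai]
      · have hiN : i < N := lt_of_le_of_ne (hNle i hi hai) hne
        rw [coeff_C_mul, coeff_eq_zero_of_natDegree_lt (by rw [hqind i]; exact hiN), mul_zero]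
    · intro h; exact absurd hNmem.1 h
  have hQdegle : Q.degree ≤ (N : WithBot ℕ) := by
    refine le_trans (degree_sum_le _ _) (Finset.sup_le ?_)
    intro i hi
    by_cases hai : a i = 0
    · simp [hai]
    · rw [degree_C_mul hai, hqdeg i]
      simp only [Nat.cast_withBot]
      exact WithBot.coe_le_coe.mpr (hNle i hi hai)
  have hQdeg : Q.degree = (N : WithBot ℕ) :=
    le_antisymm hQdegle (le_degree_of_ne_zero (by rw [hQcoeff]; exact haN))
  have hQnd : Q.natDegree = N := natDegree_eq_of_degree_eq_some hQdeg
  have hQlead : Q.leadingCoeff = a N := by rw [Polynomial.leadingCoeff, hQnd, hQcoeff]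
  -- degree of Q - S
  have hDdeg : (Q - S).degree < (N : WithBot ℕ) := by
    have hQS : Q - S = ∑ i ∈ Finset.range (k+1), C (a i) * (qi i - si i) := by
      rw [hQ, hS, ← Finset.sum_sub_distrib]
      exact Finset.sum_congr rfl fun i _ => by ring
    rw [hQS]
    refine lt_of_le_of_lt (degree_sum_le _ _) ((Finset.sup_lt_iff (WithBot.bot_lt_coe N)).mpr ?_)
    intro i hi
    by_cases hai : a i = 0
    · simp [hai, WithBot.bot_lt_coe]
    · refine lt_of_le_of_lt (le_of_eq (degree_C_mul hai)) (lt_of_lt_of_le (hdiff i) ?_)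
      simp only [Nat.cast_withBot]
      exact WithBot.coe_le_coe.mpr (hNle i hi hai)
  -- endgame
  rcases Nat.eq_zero_or_pos N with hN0 | hNpos
  · -- Q = S
    have hD0 : Q - S = 0 := by
      rw [← degree_eq_bot]
      rw [hN0] at hDdeg
      exact Nat.WithBot.lt_zero_iff.mp (by exact_mod_cast hDdeg)
    have hQSeq : Q = S := sub_eq_zero.mp hD0
    have h1 := (key M le_rfl).1
    have h2 := (key M le_rfl).2
    rw [← hQev] at h1
    rw [← hSev, ← hQSeq] at h2
    linarith
  · have hdegpos : 0 < Q.degree := by rw [hQdeg]; exact_mod_cast hNpos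
    have hSQ : S = -(Q - S) + Q := by ring
    have hnegdeg : (-(Q - S)).degree < Q.degree := by
      rw [degree_neg, hQdeg]; exact hDdeg
    have hSdeg : S.degree = Q.degree := by
      rw [hSQ]; exact degree_add_eq_right_of_degree_lt hnegdeg
    have hSlead : S.leadingCoeff = Q.leadingCoeff := by
      rw [hSQ]; exact leadingCoeff_add_of_degree_lt hnegdeg
    rcases le_or_gt Q.leadingCoeff 0 with hlc | hlc
    · have ht := Polynomial.tendsto_atBot_of_leadingCoeff_nonpos Q hdegpos hlc
      have ht2 := (ht.comp (tendsto_natCast_atTop_atTop (R := ℝ))).eventually_le_atBot 0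
      obtain ⟨n, hle, hMn⟩ := (ht2.and (eventually_ge_atTop M)).exists
      have := (key n hMn).1
      rw [← hQev] at this
      simp only [Function.comp] at hle
      linarith
    · have ht := Polynomial.tendsto_atTop_of_leadingCoeff_nonneg S
        (by rw [hSdeg]; exact hdegpos) (by rw [hSlead]; exact le_of_lt hlc)
      have ht2 := (ht.comp (tendsto_natCast_atTop_atTop (R := ℝ))).eventually_ge_atTop 0
      obtain ⟨n, hge, hMn⟩ := (ht2.and (eventually_ge_atTop M)).exists
      have := (key n hMn).2
      rw [← hSev] at this
      simp only [Function.comp] at hge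
      linarith
end
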